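/- Let φ : ℝ → ℝ be locally integrable on [0,∞) with Φ(h) = ∫_0^h |φ(t)| dt. If Φ(h) = o(h) both as h → 0⁺ and as h → +∞, then for sequences η_k = l_k/n_k with η_k → 0, n_k → ∞, l_k → ∞, we have η_k·∫_{η_k}^{l_k} |φ(t)|/t² dt → 0. -/

import Mathlib

open MeasureTheory Filter Real Set intervalIntegral

lemma abs_intble (φ : ℝ → ℝ) (hφ : LocallyIntegrableOn φ (Ici 0) volume)
    {a b : ℝ} (ha : 0 ≤ a) (hb : 0 ≤ b) :
    IntervalIntegrable (fun t => |φ t|) volume a b := by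
  rw [intervalIntegrable_iff]
  have h : IntegrableOn φ (Icc 0 (max a b)) volume :=
    hφ.integrableOn_compact_subset (Icc_subset_Ici_self) isCompact_Icc
  exact IntegrableOn.mono_set h.abs (fun x hx => ⟨le_trans (le_min ha hb) (le_of_lt hx.1), hx.2⟩)

lemma g_intble (φ : ℝ → ℝ) (hφ : LocallyIntegrableOn φ (Ici 0) volume)
    {a b : ℝ} (ha : 0 < a) (hab : a ≤ b) :
    IntervalIntegrable (fun t => |φ t| / t ^ 2) volume a b := by
  rw [intervalIntegrable_iff]
  rw [uIoc_of_le hab]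
  have h : IntegrableOn φ (Icc 0 b) volume :=
    hφ.integrableOn_compact_subset (Icc_subset_Ici_self) isCompact_Icc
  have hb : IntegrableOn (fun t => |φ t| / a ^ 2) (Ioc a b) volume :=
    (IntegrableOn.mono_set h.abs
      (fun x hx => ⟨le_of_lt (lt_of_lt_of_le ha (le_of_lt hx.1)), hx.2⟩)).div_const _
  have hmeas : AEStronglyMeasurable (fun t => |φ t| / t ^ 2) (volume.restrict (Ioc a b)) := by
    have h1 : AEStronglyMeasurable φ (volume.restrict (Ioc a b)) :=
      hφ.aestronglyMeasurable.mono_measure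
        (Measure.restrict_mono (fun x hx => le_of_lt (lt_of_lt_of_le ha (le_of_lt hx.1))) le_rfl)
    have h2 := h1.norm.mul ((measurable_id.pow_const 2).inv.aestronglyMeasurable)
    refine h2.congr (Filter.Eventually.of_forall fun t => ?_)
    simp [div_eq_mul_inv]
  refine hb.mono' hmeas ?_
  filter_upwards [ae_restrict_mem measurableSet_Ioc] with t ht
  rw [Real.norm_eq_abs, abs_of_nonneg (div_nonneg (abs_nonneg _) (sq_nonneg _))]
  gcongr
  exact le_of_lt ht.1

lemma Phi_nonneg (φ : ℝ → ℝ) (Φ : ℝ → ℝ) (hΦ : ∀ h, Φ h = ∫ t in (0:ℝ)..h, |φ t|)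
    {h : ℝ} (h0 : 0 ≤ h) : 0 ≤ Φ h := by
  rw [hΦ]; exact intervalIntegral.integral_nonneg h0 (fun t _ => abs_nonneg _)

lemma Phi_sub (φ : ℝ → ℝ) (hφ : LocallyIntegrableOn φ (Ici 0) volume)
    (Φ : ℝ → ℝ) (hΦ : ∀ h, Φ h = ∫ t in (0:ℝ)..h, |φ t|)
    {a b : ℝ} (ha : 0 ≤ a) (hb : 0 ≤ b) :
    Φ b - Φ a = ∫ t in a..b, |φ t| := by
  rw [hΦ, hΦ]
  exact intervalIntegral.integral_interval_sub_left (abs_intble φ hφ le_rfl hb)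
    (abs_intble φ hφ le_rfl ha)

lemma Phi_mono (φ : ℝ → ℝ) (hφ : LocallyIntegrableOn φ (Ici 0) volume)
    (Φ : ℝ → ℝ) (hΦ : ∀ h, Φ h = ∫ t in (0:ℝ)..h, |φ t|)
    {a b : ℝ} (ha : 0 ≤ a) (hab : a ≤ b) : Φ a ≤ Φ b := by
  have h := Phi_sub φ hφ Φ hΦ ha (le_trans ha hab)
  have h2 : 0 ≤ ∫ t in a..b, |φ t| :=
    intervalIntegral.integral_nonneg hab (fun t _ => abs_nonneg _)
  linarith

lemma step (φ : ℝ → ℝ) (hφ : LocallyIntegrableOn φ (Ici 0) volume)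
    (Φ : ℝ → ℝ) (hΦ : ∀ h, Φ h = ∫ t in (0:ℝ)..h, |φ t|)
    {a b : ℝ} (ha : 0 < a) (hab : a ≤ b) :
    (∫ t in a..b, |φ t| / t ^ 2) ≤ Φ b / a ^ 2 := by
  have h1 : (∫ t in a..b, |φ t| / t ^ 2) ≤ ∫ t in a..b, |φ t| / a ^ 2 := by
    apply intervalIntegral.integral_mono_on hab (g_intble φ hφ ha hab)
      ((abs_intble φ hφ ha.le (ha.le.trans hab)).div_const _)
    intro t ht
    gcongr
    exact ht.1
  have h2 : (∫ t in a..b, |φ t| / a ^ 2) = (Φ b - Φ a) / a ^ 2 := by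
    rw [intervalIntegral.integral_div, Phi_sub φ hφ Φ hΦ ha.le (ha.le.trans hab)]
  have h3 : (Φ b - Φ a) / a ^ 2 ≤ Φ b / a ^ 2 := by
    have := Phi_nonneg φ Φ hΦ ha.le
    gcongr
    linarith
  linarith

lemma dyad (φ : ℝ → ℝ) (hφ : LocallyIntegrableOn φ (Ici 0) volume)
    (Φ : ℝ → ℝ) (hΦ : ∀ h, Φ h = ∫ t in (0:ℝ)..h, |φ t|)
    {a : ℝ} (ha : 0 < a) (J : ℕ) :
    (∫ t in a..(2 ^ J * a), |φ t| / t ^ 2) ≤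
      ∑ j ∈ Finset.range J, Φ (2 ^ (j + 1) * a) / (2 ^ j * a) ^ 2 := by
  have hpt : ∀ j : ℕ, (0:ℝ) < 2 ^ j * a := fun j => by positivity
  have hle : ∀ j : ℕ, (2:ℝ) ^ j * a ≤ 2 ^ (j + 1) * a := by
    intro j
    rw [pow_succ]
    nlinarith [hpt j]
  have key := intervalIntegral.sum_integral_adjacent_intervals
    (f := fun t => |φ t| / t ^ 2) (μ := volume) (a := fun j => 2 ^ j * a) (n := J)
    (fun i _ => g_intble φ hφ (hpt i) (hle i))
  simp only [pow_zero, one_mul] at key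
  rw [← key]
  exact Finset.sum_le_sum fun j _ => step φ hφ Φ hΦ (hpt j) (hle j)

lemma geom_bound (r : ℝ) (h0 : 0 ≤ r) (h1 : r < 1) (J : ℕ) :
    ∑ j ∈ Finset.range J, r ^ j ≤ 1 / (1 - r) := by
  have hr : 0 < 1 - r := by linarith
  rw [geom_sum_eq h1.ne]
  have e : (r ^ J - 1) / (r - 1) = (1 - r ^ J) / (1 - r) := by
    rw [← neg_div_neg_eq]; ring_nf
  rw [e]
  gcongr
  nlinarith [pow_nonneg h0 J]

lemma small_scale (Φ : ℝ → ℝ) (h0 : Tendsto (fun h : ℝ => Φ h / h) (nhdsWithin 0 (Ioi 0)) (nhds 0)) (ε' : ℝ) (hε' : 0 < ε') :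
    ∃ δ > 0, ∀ h : ℝ, 0 < h → h < δ → Φ h ≤ ε' * h := by
  rw [Metric.tendsto_nhdsWithin_nhds] at h0
  obtain ⟨δ, hδ0, hδ⟩ := h0 ε' hε'
  refine ⟨δ, hδ0, fun h hh1 hh2 => ?_⟩
  have hd := hδ (mem_Ioi.mpr hh1) (by rwa [Real.dist_eq, sub_zero, abs_of_pos hh1])
  rw [Real.dist_eq, sub_zero] at hd
  have h2 : Φ h / h ≤ |Φ h / h| := le_abs_self _
  have h3 : Φ h = (Φ h / h) * h := by field_simp
  nlinarith

lemma large_scale (φ : ℝ → ℝ) (hφ : LocallyIntegrableOn φ (Ici 0) volume)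
    (Φ : ℝ → ℝ) (hΦ : ∀ h, Φ h = ∫ t in (0:ℝ)..h, |φ t|) (hinf : Tendsto (fun h : ℝ => Φ h / h) atTop (nhds 0)) (ε' : ℝ) (hε' : 0 < ε') :
    ∃ C : ℝ, 0 ≤ C ∧ ∀ h : ℝ, 0 < h → Φ h ≤ ε' * h + C := by
  rw [Metric.tendsto_atTop] at hinf
  obtain ⟨N, hN⟩ := hinf ε' hε'
  set M := max N 1 with hM
  have hM1 : (0:ℝ) < M := lt_of_lt_of_le one_pos (le_max_right _ _)
  refine ⟨Φ M, Phi_nonneg φ Φ hΦ hM1.le, fun h hh => ?_⟩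
  rcases le_or_gt h M with hcase | hcase
  · have := Phi_mono φ hφ Φ hΦ hh.le hcase
    nlinarith
  · have hd := hN h (le_trans (le_max_left _ _) hcase.le)
    rw [Real.dist_eq, sub_zero] at hd
    have h2 : Φ h / h ≤ |Φ h / h| := le_abs_self _
    have h3 : Φ h = (Φ h / h) * h := by field_simp
    nlinarith [Phi_nonneg φ Φ hΦ hM1.le]

lemma alg1 (x eps : ℝ) (hx : x ≠ 0) (j : ℕ) :
    (eps * (2 ^ (j + 1) * x)) / (2 ^ j * x) ^ 2 = (2 * eps / x) * (1 / 2) ^ j := by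
  have h2j : ((2:ℝ) ^ j) ≠ 0 := by positivity
  rw [pow_succ]
  field_simp
  have h5 : (1 / 2 : ℝ) ^ j * 2 ^ j = 1 := by rw [← mul_pow]; norm_num
  linear_combination (-eps) * h5

lemma alg2 (x eps C : ℝ) (hx : x ≠ 0) (j : ℕ) :
    (eps * (2 ^ (j + 1) * x) + C) / (2 ^ j * x) ^ 2
      = (2 * eps / x) * (1 / 2) ^ j + (C / x ^ 2) * (1 / 4) ^ j := by
  have h2j : ((2:ℝ) ^ j) ≠ 0 := by positivity
  have h4 : ((4:ℝ)) ^ j = (2 ^ j) * (2 ^ j) := by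
    rw [show (4:ℝ) = 2 * 2 by norm_num, mul_pow]
  rw [pow_succ]
  field_simp
  have h5 : (1 / 2 : ℝ) ^ j * 2 ^ j = 1 := by rw [← mul_pow]; norm_num
  have h6 : (1 / 4 : ℝ) ^ j * (2 ^ j) ^ 2 = 1 := by
    rw [← pow_mul, mul_comm j 2, pow_mul, ← mul_pow]; norm_num
  linear_combination (-(eps * 2 * x * 2 ^ j)) * h5 - C * h6

set_option maxHeartbeats 1000000 in
theorem second_term_small
    (φ : ℝ → ℝ) (hφ : LocallyIntegrableOn φ (Ici 0) volume)
    (Φ : ℝ → ℝ) (hΦ : ∀ h, Φ h = ∫ t in (0:ℝ)..h, |φ t|)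
    (h0 : Tendsto (fun h : ℝ => Φ h / h) (nhdsWithin 0 (Ioi 0)) (nhds 0))
    (hinf : Tendsto (fun h : ℝ => Φ h / h) atTop (nhds 0))
    (η l : ℕ → ℝ) (n : ℕ → ℕ)
    (hpos : ∀ k, 0 < η k) (hnl : ∀ k, l k = (n k : ℝ) * η k)
    (hη : Tendsto η atTop (nhds 0))
    (hn : Tendsto n atTop atTop)
    (hl : Tendsto l atTop atTop) :
    Tendsto (fun k => η k * ∫ t in (η k)..(l k), |φ t| / t ^ 2) atTop (nhds 0) := by
  classical
  rw [NormedAddCommGroup.tendsto_nhds_zero]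
  intro ε hε
  set ε' := ε / 6 with hε'def
  have hε' : 0 < ε' := by positivity
  obtain ⟨δ, hδ0, hδ⟩ := small_scale Φ h0 ε' hε'
  obtain ⟨C, hC0, hC⟩ := large_scale φ hφ Φ hΦ hinf ε' hε'
  set K := 16 * ε' / δ + 64 / 3 * C / δ ^ 2 with hKdef
  have hK0 : 0 ≤ K := by positivity
  have ev1 : ∀ᶠ k in atTop, η k < δ / 2 :=
    hη.eventually (eventually_lt_nhds (by positivity))
  have ev2 : ∀ᶠ k in atTop, δ < l k := hl.eventually (eventually_gt_atTop δ)
  have ev3 : ∀ᶠ k in atTop, η k * K < ε' := by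
    have h := hη.mul_const K
    rw [zero_mul] at h
    exact h.eventually (eventually_lt_nhds hε')
  filter_upwards [ev1, ev2, ev3] with k hk1 hk2 hk3
  set e := η k with hedef
  set L := l k with hLdef
  have he : 0 < e := hpos k
  -- choose J with 2^J e ∈ (δ/4, δ/2]
  set P : ℕ → Prop := fun J => 2 ^ J * e ≤ δ / 2 with hPdef
  obtain ⟨m, hm⟩ : ∃ m : ℕ, ¬ P m := by
    obtain ⟨m, hm⟩ := exists_nat_gt (δ / (2 * e))
    have h2m : (m:ℝ) < 2 ^ m := by exact_mod_cast Nat.lt_two_pow_self (n := m)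
    refine ⟨m, ?_⟩
    simp only [hPdef, not_le]
    calc δ / 2 = (δ / (2 * e)) * e := by field_simp
    _ < 2 ^ m * e := by exact mul_lt_mul_of_pos_right (lt_trans hm h2m) he
  set J := Nat.findGreatest P m with hJdef
  have hP0 : P 0 := by simp only [hPdef, pow_zero, one_mul]; linarith
  have hPJ : P J := Nat.findGreatest_spec (Nat.zero_le m) hP0
  have hJm : J < m := by
    rcases lt_or_eq_of_le (Nat.findGreatest_le (P := P) m) with h | h
    · exact h
    · exact absurd (h ▸ hPJ) hm
  have hnPJ1 : ¬ P (J + 1) := Nat.findGreatest_is_greatest (Nat.lt_succ_self J) hJm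
  set c := 2 ^ J * e with hcdef
  have hc1 : c ≤ δ / 2 := hPJ
  have hc2 : δ / 4 < c := by
    simp only [hPdef, not_le, pow_succ] at hnPJ1
    rw [hcdef]
    linarith
  have hc0 : 0 < c := by positivity
  have hec : e ≤ c := by
    have h1 : (1:ℝ) ≤ 2 ^ J := by exact_mod_cast Nat.one_le_two_pow
    calc e = 1 * e := (one_mul e).symm
    _ ≤ 2 ^ J * e := by gcongr
  have hcL : c ≤ L := by linarith
  have heL : e ≤ L := le_trans hec hcL
  -- Part 1
  have hP1 : (∫ t in e..c, |φ t| / t ^ 2) ≤ 4 * ε' / e := by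
    refine le_trans (dyad φ hφ Φ hΦ he J) ?_
    have hterm : ∀ j ∈ Finset.range J,
        Φ (2 ^ (j + 1) * e) / (2 ^ j * e) ^ 2 ≤ (2 * ε' / e) * (1 / 2) ^ j := by
      intro j hj
      have hj' : j + 1 ≤ J := Finset.mem_range.mp hj
      have hb : (2:ℝ) ^ (j + 1) * e ≤ c := by
        rw [hcdef]
        gcongr
        · norm_num
      have hbδ : (2:ℝ) ^ (j + 1) * e < δ := lt_of_le_of_lt hb (by linarith)
      have hΦb := hδ _ (by positivity) hbδ
      have h2j : ((2:ℝ) ^ j) ≠ 0 := by positivity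
      calc Φ (2 ^ (j + 1) * e) / (2 ^ j * e) ^ 2
          ≤ (ε' * (2 ^ (j + 1) * e)) / (2 ^ j * e) ^ 2 := by gcongr
      _ = (2 * ε' / e) * (1 / 2) ^ j := alg1 e ε' he.ne' j
    refine le_trans (Finset.sum_le_sum hterm) ?_
    rw [← Finset.mul_sum]
    have hg := geom_bound (1 / 2) (by norm_num) (by norm_num) J
    calc (2 * ε' / e) * ∑ j ∈ Finset.range J, (1 / 2 : ℝ) ^ j
        ≤ (2 * ε' / e) * (1 / (1 - 1 / 2)) := by gcongr
    _ = 4 * ε' / e := by ring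
  -- Part 2
  obtain ⟨m2, hm2⟩ := exists_nat_gt (L / c)
  have hLc : L ≤ 2 ^ m2 * c := by
    have h2m : (m2:ℝ) ≤ 2 ^ m2 := by exact_mod_cast (Nat.lt_two_pow_self (n := m2)).le
    calc L = (L / c) * c := by field_simp
    _ ≤ 2 ^ m2 * c := by gcongr; exact le_trans hm2.le h2m
  have hP2 : (∫ t in c..L, |φ t| / t ^ 2) ≤ K := by
    have hL0 : 0 < L := by linarith
    have hmono : (∫ t in c..L, |φ t| / t ^ 2) ≤ ∫ t in c..(2 ^ m2 * c), |φ t| / t ^ 2 := by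
      rw [← intervalIntegral.integral_add_adjacent_intervals (g_intble φ hφ hc0 hcL)
        (g_intble φ hφ hL0 hLc)]
      have hnn : 0 ≤ ∫ t in L..(2 ^ m2 * c), |φ t| / t ^ 2 :=
        intervalIntegral.integral_nonneg hLc (fun t _ => by positivity)
      linarith
    refine le_trans (le_trans hmono (dyad φ hφ Φ hΦ hc0 m2)) ?_
    have hterm : ∀ j ∈ Finset.range m2,
        Φ (2 ^ (j + 1) * c) / (2 ^ j * c) ^ 2
          ≤ (2 * ε' / c) * (1 / 2) ^ j + (C / c ^ 2) * (1 / 4) ^ j := by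
      intro j _
      have hΦb := hC (2 ^ (j + 1) * c) (by positivity)
      have h2j : ((2:ℝ) ^ j) ≠ 0 := by positivity
      calc Φ (2 ^ (j + 1) * c) / (2 ^ j * c) ^ 2
          ≤ (ε' * (2 ^ (j + 1) * c) + C) / (2 ^ j * c) ^ 2 := by gcongr
      _ = (2 * ε' / c) * (1 / 2) ^ j + (C / c ^ 2) * (1 / 4) ^ j := alg2 c ε' C hc0.ne' j
    refine le_trans (Finset.sum_le_sum hterm) ?_
    rw [Finset.sum_add_distrib, ← Finset.mul_sum, ← Finset.mul_sum]
    have hg1 := geom_bound (1 / 2) (by norm_num) (by norm_num) m2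
    have hg2 := geom_bound (1 / 4) (by norm_num) (by norm_num) m2
    have e1 : (2 * ε' / c) * ∑ j ∈ Finset.range m2, (1 / 2 : ℝ) ^ j ≤ 4 * ε' / c := by
      calc (2 * ε' / c) * ∑ j ∈ Finset.range m2, (1 / 2 : ℝ) ^ j
          ≤ (2 * ε' / c) * (1 / (1 - 1 / 2)) := by gcongr
      _ = 4 * ε' / c := by ring
    have e2 : (C / c ^ 2) * ∑ j ∈ Finset.range m2, (1 / 4 : ℝ) ^ j ≤ 4 / 3 * C / c ^ 2 := by
      calc (C / c ^ 2) * ∑ j ∈ Finset.range m2, (1 / 4 : ℝ) ^ j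
          ≤ (C / c ^ 2) * (1 / (1 - 1 / 4)) := by gcongr
      _ = 4 / 3 * C / c ^ 2 := by ring
    have e3 : 4 * ε' / c ≤ 16 * ε' / δ := by
      rw [div_le_div_iff₀ hc0 hδ0]
      nlinarith
    have e4 : 4 / 3 * C / c ^ 2 ≤ 64 / 3 * C / δ ^ 2 := by
      rw [div_le_div_iff₀ (by positivity) (by positivity)]
      nlinarith [mul_nonneg hC0 (sq_nonneg (c - δ/4)), mul_nonneg hC0 (mul_pos hc0 hδ0).le]
    rw [hKdef]
    linarith
  -- combine
  have hsplit := intervalIntegral.integral_add_adjacent_intervals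
    (g_intble φ hφ he hec) (g_intble φ hφ hc0 hcL)
  have hnn : 0 ≤ ∫ t in e..L, |φ t| / t ^ 2 :=
    intervalIntegral.integral_nonneg heL (fun t _ => by positivity)
  rw [Real.norm_eq_abs, abs_of_nonneg (mul_nonneg he.le hnn)]
  have hfin : e * ∫ t in e..L, |φ t| / t ^ 2 ≤ 4 * ε' + e * K := by
    rw [← hsplit, mul_add]
    have h1 : e * (∫ t in e..c, |φ t| / t ^ 2) ≤ e * (4 * ε' / e) :=
      mul_le_mul_of_nonneg_left hP1 he.le
    have h1' : e * (4 * ε' / e) = 4 * ε' := by field_simp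
    have h2 : e * (∫ t in c..L, |φ t| / t ^ 2) ≤ e * K :=
      mul_le_mul_of_nonneg_left hP2 he.le
    linarith
  have : e * K < ε' := hk3
  rw [hε'def] at *
  linarith
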